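/- For every T ≥ 1, the periodic Gaussian φ_p is monotonically increasing on the interval [−π, 0] and monotonically decreasing on the interval [0, π]. -/

import Mathlib

open Real Set

noncomputable section

/-- The (unnormalized) `2π`-periodization of the Gaussian `x ↦ exp(-x²T²/2)`. -/
def periodicGaussSum (T x : ℝ) : ℝ :=
  ∑' j : ℤ, Real.exp (-((x + 2 * π * j) ^ 2 * T ^ 2) / 2)

/-- The normalizing constant `W = (Σ_{j∈ℤ} exp(-2π²j²T²))⁻¹`, so that `φ_p(0) = 1`. -/
def Wconst (T : ℝ) : ℝ := (∑' j : ℤ, Real.exp (-(2 * π ^ 2 * j ^ 2 * T ^ 2)))⁻¹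

/-- The periodic Gaussian `φ_p(x) = W·Σ_{j∈ℤ} exp(-(x+2πj)²T²/2)`. -/
def phip (T x : ℝ) : ℝ := Wconst T * periodicGaussSum T x

/-!
With `gauss T y = exp (-y²T²/2)`, `periodicGaussSum T` is even and its derivative is
`-T²·S(x)`, where `S(x) = ∑ⱼ (x + 2πj) · gauss T (x + 2πj)`, so it suffices that `S ≥ 0` on
`[0, π]`. For `1 ≤ x ≤ π` pair `j = n` with `j = -(n + 1)`: then `1 ≤ x + 2πn ≤ 2π(n + 1) - x`,
and `y ↦ y · gauss T y` decreases on `[1/T, ∞)`, so every pair is nonnegative.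
For `0 ≤ x ≤ 1` pair `j = n + 1` with `j = -(n + 1)` instead: such a pair is negative, but by
the Gaussian decay at `2π(n + 1)` it is at least `-x·e^{-T²/2}/2^(n+1)`, and the `j = 0` term
`x·e^{-x²T²/2} ≥ x·e^{-T²/2}` pays for all of them.
-/

lemma exp_sub_exp_le (a b : ℝ) : exp a - exp b ≤ (a - b) * exp a := by
  have h := mul_le_mul_of_nonneg_left (add_one_le_exp (b - a)) (exp_pos a).le
  rw [← exp_add, add_sub_cancel] at h
  linarith

lemma mul_exp_neg_le (w : ℝ) : w * exp (-w) ≤ 2 * exp (-(w / 2)) := by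
  have h := mul_le_mul_of_nonneg_right (add_one_le_exp (w / 2)) (exp_pos (-w)).le
  rw [← exp_add, show w / 2 + -w = -(w / 2) by ring] at h
  nlinarith [exp_pos (-w)]

def gauss (T y : ℝ) : ℝ := exp (-(y ^ 2 * T ^ 2) / 2)

lemma gauss_pos (T y : ℝ) : 0 < gauss T y := exp_pos _

lemma gauss_le_gauss {T y z : ℝ} (h : y ^ 2 ≤ z ^ 2) : gauss T z ≤ gauss T y := by
  unfold gauss
  gcongr

lemma gauss_neg (T y : ℝ) : gauss T (-y) = gauss T y := by rw [gauss, gauss, neg_sq]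

lemma hasDerivAt_gauss (T y : ℝ) : HasDerivAt (gauss T) (-T ^ 2 * (y * gauss T y)) y := by
  have h : HasDerivAt (fun y : ℝ => -(y ^ 2 * T ^ 2) / 2) (-(y * T ^ 2)) y :=
    (((hasDerivAt_pow 2 y).mul_const (T ^ 2)).neg.div_const 2).congr_deriv (by ring)
  exact h.exp.congr_deriv (by rw [gauss]; ring)

lemma hasDerivAt_mul_gauss (T y : ℝ) :
    HasDerivAt (fun y => y * gauss T y) ((1 - y ^ 2 * T ^ 2) * gauss T y) y :=
  ((hasDerivAt_id' y).mul (hasDerivAt_gauss T y)).congr_deriv (by ring)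

lemma antitoneOn_mul_gauss {T : ℝ} (hT : 0 < T) :
    AntitoneOn (fun y => y * gauss T y) (Ici T⁻¹) := by
  refine antitoneOn_of_hasDerivWithinAt_nonpos (convex_Ici _)
    (fun y _ => (hasDerivAt_mul_gauss T y).continuousAt.continuousWithinAt)
    (fun y _ => (hasDerivAt_mul_gauss T y).hasDerivWithinAt) fun y hy => ?_
  rw [interior_Ici, mem_Ioi, inv_lt_iff_one_lt_mul₀ hT] at hy
  exact mul_nonpos_of_nonpos_of_nonneg (by nlinarith) (gauss_pos T y).le

lemma abs_mul_mul_gauss_le (T y : ℝ) : |T * y| * gauss T y ≤ exp (-(y ^ 2 * T ^ 2) / 4) := by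
  have hle : |T * y| ≤ exp (y ^ 2 * T ^ 2 / 4) := by
    have := add_one_le_exp (y ^ 2 * T ^ 2 / 4)
    nlinarith [sq_nonneg (|T * y| - 2), sq_abs (T * y)]
  calc |T * y| * gauss T y ≤ exp (y ^ 2 * T ^ 2 / 4) * gauss T y := by
        gcongr; exact (gauss_pos T y).le
    _ = exp (-(y ^ 2 * T ^ 2) / 4) := by rw [gauss, ← exp_add]; ring_nf

lemma gauss_le_exp_neg_sq_div_four (T y : ℝ) : gauss T y ≤ exp (-(y ^ 2 * T ^ 2) / 4) := by
  rw [gauss, exp_le_exp]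
  nlinarith [sq_nonneg (y * T)]

lemma exp_neg_sq_add_le {T R z : ℝ} (hz : |z| ≤ R) (j : ℤ) :
    exp (-((z + 2 * π * j) ^ 2 * T ^ 2) / 4) ≤
      exp (R ^ 2 * T ^ 2 / 4) * exp (-π * (π * T ^ 2 / 2 * j ^ 2)) := by
  rw [← exp_add, exp_le_exp]
  have hzR := sq_le_sq' (abs_le.mp hz).1 (abs_le.mp hz).2
  have : (2 * π * j) ^ 2 / 2 - R ^ 2 ≤ (z + 2 * π * j) ^ 2 := by
    nlinarith [sq_nonneg (2 * z + 2 * π * j)]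
  nlinarith [mul_le_mul_of_nonneg_right this (sq_nonneg T)]

lemma summable_exp_neg_pi_mul_int_sq {c : ℝ} (hc : 0 < c) :
    Summable fun j : ℤ => exp (-π * (c * j ^ 2)) := by
  simpa using summable_pow_mul_jacobiTheta₂_term_bound 0 hc 0

def periodicGaussSlopeSum (T x : ℝ) : ℝ :=
  ∑' j : ℤ, (x + 2 * π * j) * gauss T (x + 2 * π * j)

lemma summable_mul_gauss_add {T : ℝ} (hT : T ≠ 0) (x : ℝ) :
    Summable fun j : ℤ => (x + 2 * π * j) * gauss T (x + 2 * π * j) := by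
  have hc : 0 < π * T ^ 2 / 2 := by positivity
  refine .of_norm_bounded
    (((summable_exp_neg_pi_mul_int_sq hc).mul_left (exp (|x| ^ 2 * T ^ 2 / 4))).mul_left |T|⁻¹)
    fun j => ?_
  rw [norm_mul, norm_of_nonneg (gauss_pos T _).le, norm_eq_abs, ← inv_mul_cancel_left₀
    (abs_ne_zero.mpr hT) |x + 2 * π * j|, mul_assoc, ← abs_mul]
  exact mul_le_mul_of_nonneg_left
    ((abs_mul_mul_gauss_le T _).trans (exp_neg_sq_add_le le_rfl j)) (by positivity)

lemma hasDerivAt_periodicGaussSum {T : ℝ} (hT : T ≠ 0) (x : ℝ) :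
    HasDerivAt (periodicGaussSum T) (-T ^ 2 * periodicGaussSlopeSum T x) x := by
  set R := |x| + 1
  have hc : 0 < π * T ^ 2 / 2 := by positivity
  have hderiv (j : ℤ) (z : ℝ) : HasDerivAt (fun z => gauss T (z + 2 * π * j))
      (-T ^ 2 * ((z + 2 * π * j) * gauss T (z + 2 * π * j))) z :=
    (hasDerivAt_gauss T _).comp_add_const z _
  have hbound (j : ℤ) (z : ℝ) (hz : z ∈ Ioo (-R) R) :
      ‖-T ^ 2 * ((z + 2 * π * j) * gauss T (z + 2 * π * j))‖ ≤
        |T| * exp (R ^ 2 * T ^ 2 / 4) * exp (-π * (π * T ^ 2 / 2 * j ^ 2)) := by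
    have hnorm : ‖-T ^ 2 * ((z + 2 * π * j) * gauss T (z + 2 * π * j))‖ =
        |T| * (|T * (z + 2 * π * j)| * gauss T (z + 2 * π * j)) := by
      rw [norm_eq_abs, abs_mul, abs_mul, abs_mul, abs_neg, abs_pow, sq_abs,
        abs_of_pos (gauss_pos T _), ← sq_abs T]
      ring
    rw [hnorm, mul_assoc (|T|)]
    exact mul_le_mul_of_nonneg_left ((abs_mul_mul_gauss_le T _).trans
      (exp_neg_sq_add_le (abs_le.mpr ⟨hz.1.le, hz.2.le⟩) j)) (abs_nonneg T)
  have hsummable₀ : Summable fun j : ℤ => gauss T (0 + 2 * π * j) := by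
    refine .of_nonneg_of_le (fun j => (gauss_pos T _).le) (fun j => ?_)
      ((summable_exp_neg_pi_mul_int_sq hc).mul_left (exp (0 ^ 2 * T ^ 2 / 4)))
    exact (gauss_le_exp_neg_sq_div_four T _).trans (exp_neg_sq_add_le (by simp) j)
  rw [periodicGaussSlopeSum, ← tsum_mul_left]
  exact hasDerivAt_tsum_of_isPreconnected
    ((summable_exp_neg_pi_mul_int_sq hc).mul_left _) isOpen_Ioo isPreconnected_Ioo
    (fun j z _ => hderiv j z) hbound ⟨by linarith [abs_nonneg x], by positivity⟩ hsummable₀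
    ⟨by linarith [neg_abs_le x], by linarith [le_abs_self x]⟩

lemma sq_mul_exp_neg_le {T : ℝ} (hT : 1 ≤ T) (n : ℕ) :
    2 * (2 * π * (n + 1)) ^ 2 * T ^ 2 * exp (-((2 * π * (n + 1)) ^ 2 * T ^ 2 / 4)) ≤
      1 / 2 / 2 ^ n := by
  set w := (2 * π * (n + 1)) ^ 2 * T ^ 2 / 4
  have hw : 4 * (n + 1) ≤ w / 2 := by
    have hπ : 8 ≤ π ^ 2 := by nlinarith [pi_gt_three]
    have hT2 : 1 ≤ T ^ 2 := by nlinarith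
    have hn : (n + 1 : ℝ) ≤ (n + 1) ^ 2 := by nlinarith
    have : 8 * (n + 1) ^ 2 * 1 ≤ π ^ 2 * (n + 1) ^ 2 * T ^ 2 := by gcongr
    simp only [w]
    nlinarith
  have h32 : 32 * 2 ^ n ≤ exp (4 * (n + 1)) := by
    have h4 : (32 : ℝ) ≤ exp 4 := by
      have : (2.7 : ℝ) ^ 4 ≤ exp 1 ^ 4 := by gcongr; linarith [exp_one_gt_d9]
      rw [← exp_nat_mul] at this
      norm_num at this ⊢
      linarith
    calc (32 : ℝ) * 2 ^ n ≤ 32 * 32 ^ n := by gcongr; norm_num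
      _ = 32 ^ (n + 1) := by ring
      _ ≤ exp 4 ^ (n + 1) := by gcongr
      _ = exp (4 * (n + 1)) := by rw [← exp_nat_mul]; push_cast; ring_nf
  calc 2 * (2 * π * (n + 1)) ^ 2 * T ^ 2 * exp (-w) = 8 * (w * exp (-w)) := by ring
    _ ≤ 8 * (2 * exp (-(w / 2))) := mul_le_mul_of_nonneg_left (mul_exp_neg_le w) (by norm_num)
    _ ≤ 16 * exp (-(4 * (n + 1))) := by rw [← mul_assoc]; gcongr; norm_num
    _ ≤ 1 / 2 / 2 ^ n := by
        rw [exp_neg, ← div_eq_mul_inv, div_le_div_iff₀ (exp_pos _) (by positivity)]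
        linarith [h32]

lemma mul_gauss_sub_mul_gauss_le {T x : ℝ} (hT : 1 ≤ T) (hx₀ : 0 ≤ x) (hx₁ : x ≤ 1)
    (n : ℕ) :
    (2 * π * (n + 1) - x) * gauss T (2 * π * (n + 1) - x) -
        (2 * π * (n + 1) + x) * gauss T (2 * π * (n + 1) + x) ≤ x * gauss T 1 / 2 / 2 ^ n := by
  set A := 2 * π * (n + 1)
  have hA : 4 ≤ A := by nlinarith [pi_gt_three, (n.cast_nonneg : (0 : ℝ) ≤ n)]
  have hdiff : gauss T (A - x) - gauss T (A + x) ≤ 2 * A * x * T ^ 2 * gauss T (A - x) := by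
    have h := exp_sub_exp_le (-((A - x) ^ 2 * T ^ 2) / 2) (-((A + x) ^ 2 * T ^ 2) / 2)
    rwa [show -((A - x) ^ 2 * T ^ 2) / 2 - -((A + x) ^ 2 * T ^ 2) / 2 = 2 * A * x * T ^ 2 by ring]
      at h
  have hfar : gauss T (A - x) ≤ gauss T 1 * exp (-(A ^ 2 * T ^ 2 / 4)) := by
    rw [gauss, gauss, ← exp_add, exp_le_exp]
    have : 1 + A ^ 2 / 2 ≤ (A - x) ^ 2 := by nlinarith
    nlinarith [mul_le_mul_of_nonneg_right this (sq_nonneg T)]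
  have hpos := gauss_pos T (A - x)
  calc (A - x) * gauss T (A - x) - (A + x) * gauss T (A + x)
      ≤ A * (gauss T (A - x) - gauss T (A + x)) := by nlinarith [gauss_pos T (A + x)]
    _ ≤ A * (2 * A * x * T ^ 2 * gauss T (A - x)) := by gcongr
    _ = x * (2 * A ^ 2 * T ^ 2 * gauss T (A - x)) := by ring
    _ ≤ x * (2 * A ^ 2 * T ^ 2 * (gauss T 1 * exp (-(A ^ 2 * T ^ 2 / 4)))) := by gcongr
    _ = x * gauss T 1 * (2 * A ^ 2 * T ^ 2 * exp (-(A ^ 2 * T ^ 2 / 4))) := by ring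
    _ ≤ x * gauss T 1 * (1 / 2 / 2 ^ n) := by
        have := gauss_pos T 1
        gcongr
        exact sq_mul_exp_neg_le hT n
    _ = x * gauss T 1 / 2 / 2 ^ n := by ring

lemma periodicGaussSlopeSum_nonneg_of_one_le {T x : ℝ} (hT : 1 ≤ T) (hx₁ : 1 ≤ x)
    (hxπ : x ≤ π) :
    0 ≤ periodicGaussSlopeSum T x := by
  refine ((summable_mul_gauss_add (by positivity) x).hasSum.nat_add_neg_add_one).nonneg
    fun n => ?_
  have hn : (0 : ℝ) ≤ n := n.cast_nonneg
  have hmem : x + 2 * π * n ∈ Ici T⁻¹ :=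
    mem_Ici.mpr ((inv_le_one_of_one_le₀ hT).trans (by nlinarith [pi_pos]))
  have hle : x + 2 * π * n ≤ 2 * π * (n + 1) - x := by nlinarith
  have key := antitoneOn_mul_gauss (by positivity) hmem (hmem.trans hle) hle
  have hneg : x + 2 * π * ((-((n : ℤ) + 1) : ℤ) : ℝ) = -(2 * π * (n + 1) - x) := by
    push_cast; ring
  simp only [hneg, gauss_neg, Int.cast_natCast] at key ⊢
  linarith

lemma periodicGaussSlopeSum_nonneg_of_le_one {T x : ℝ} (hT : 1 ≤ T) (hx₀ : 0 ≤ x)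
    (hx₁ : x ≤ 1) :
    0 ≤ periodicGaussSlopeSum T x := by
  set f := fun j : ℤ => (x + 2 * π * j) * gauss T (x + 2 * π * j)
  have hpairs : HasSum (fun n : ℕ => f (n + 1 : ℕ) + f (-(n + 1 : ℕ)))
      (periodicGaussSlopeSum T x - f 0) := by
    have h := (hasSum_nat_add_iff' 1).mpr
      (summable_mul_gauss_add (by positivity) x).hasSum.nat_add_neg
    rwa [Finset.sum_range_one, Nat.cast_zero, neg_zero, add_sub_add_right_eq_sub] at h
  have hbound (n : ℕ) :
      -(x * gauss T 1 / 2 / 2 ^ n) ≤ f (n + 1 : ℕ) + f (-(n + 1 : ℕ)) := by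
    have h := mul_gauss_sub_mul_gauss_le hT hx₀ hx₁ n
    have hneg : x + 2 * π * -((n : ℝ) + 1) = -(2 * π * (n + 1) - x) := by ring
    simp only [f]
    push_cast
    rw [hneg, gauss_neg, add_comm x]
    linarith
  have hcentre : x * gauss T 1 ≤ f 0 := by
    simp only [f, Int.cast_zero, mul_zero, add_zero]
    exact mul_le_mul_of_nonneg_left (gauss_le_gauss (by nlinarith)) hx₀
  linarith [hasSum_le hbound (hasSum_geometric_two' (x * gauss T 1)).neg hpairs]

lemma periodicGaussSlopeSum_nonneg {T x : ℝ} (hT : 1 ≤ T) (hx : x ∈ Icc 0 π) :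
    0 ≤ periodicGaussSlopeSum T x := by
  rcases le_total x 1 with hx₁ | hx₁
  · exact periodicGaussSlopeSum_nonneg_of_le_one hT hx.1 hx₁
  · exact periodicGaussSlopeSum_nonneg_of_one_le hT hx₁ hx.2

lemma periodicGaussSum_neg (T x : ℝ) : periodicGaussSum T (-x) = periodicGaussSum T x := by
  rw [periodicGaussSum, ← (Equiv.neg ℤ).tsum_eq]
  refine tsum_congr fun j => ?_
  simp only [Equiv.neg_apply, Int.cast_neg]
  rw [show -x + 2 * π * -(j : ℝ) = -(x + 2 * π * j) by ring, neg_sq]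

lemma antitoneOn_periodicGaussSum {T : ℝ} (hT : 1 ≤ T) :
    AntitoneOn (periodicGaussSum T) (Icc 0 π) := by
  have hderiv := hasDerivAt_periodicGaussSum (by positivity : T ≠ 0)
  refine antitoneOn_of_hasDerivWithinAt_nonpos (convex_Icc 0 π)
    (fun x _ => (hderiv x).continuousAt.continuousWithinAt)
    (fun x _ => (hderiv x).hasDerivWithinAt) fun x hx => ?_
  exact mul_nonpos_of_nonpos_of_nonneg (by nlinarith)
    (periodicGaussSlopeSum_nonneg hT (interior_subset hx))

lemma Wconst_nonneg (T : ℝ) : 0 ≤ Wconst T :=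
  inv_nonneg.mpr (tsum_nonneg fun _ => (exp_pos _).le)

theorem periodicGaussian_monotone (T : ℝ) (hT : 1 ≤ T) :
    MonotoneOn (phip T) (Icc (-π) 0) ∧ AntitoneOn (phip T) (Icc 0 π) := by
  have hanti : AntitoneOn (phip T) (Icc 0 π) := fun u hu v hv huv =>
    mul_le_mul_of_nonneg_left (antitoneOn_periodicGaussSum hT hu hv huv) (Wconst_nonneg T)
  refine ⟨fun u hu v hv huv => ?_, hanti⟩
  have heven (y : ℝ) : phip T (-y) = phip T y := by rw [phip, phip, periodicGaussSum_neg]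
  rw [← heven u, ← heven v]
  exact hanti ⟨by linarith [hv.2], by linarith [hv.1]⟩
    ⟨by linarith [hu.2], by linarith [hu.1]⟩ (neg_le_neg huv)

end
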